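/- arXiv:1603.07812 — 2 statements merged into one kernel-verified Lean document; each statement's English description precedes it below -/
import Mathlib

section
/- Let T, S be positive contractions on L¹(μ) with T ≤ S and ‖S − T‖ < 1. Then ‖Sⁿ − Tⁿ‖ < 1 for all n ∈ ℕ. -/
open MeasureTheory

/-!
The L¹ norm is additive on the positive cone. For `f ≥ 0` let `eₙ = ‖(Sⁿ - Tⁿ) f‖` and
`δ = ‖S - T‖`. Since `Sⁿ f = Tⁿ f + (Sⁿ - Tⁿ) f` with both summands nonnegative,
`‖Tⁿ f‖ ≤ ‖f‖ - eₙ`; together with `Sⁿ⁺¹ - Tⁿ⁺¹ = S (Sⁿ - Tⁿ) + (S - T) Tⁿ` this gives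
`‖f‖ - eₙ₊₁ ≥ (1 - δ) (‖f‖ - eₙ)`, hence `eₙ ≤ (1 - (1 - δ)ⁿ) ‖f‖`. A bound on the positive cone
bounds the operator norm, because `‖f‖ = ‖f⁺‖ + ‖f⁻‖`.
-/

namespace ContinuousLinearMap

section Order

variable {E : Type*} [AddCommGroup E] [TopologicalSpace E] [Module ℝ E] [PartialOrder E]
  {T S : E →L[ℝ] E}

lemma pow_apply_nonneg (hT : ∀ f, 0 ≤ f → 0 ≤ T f) (n : ℕ) {f : E} (hf : 0 ≤ f) :
    0 ≤ (T ^ n) f := by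
  induction n with
  | zero => exact hf
  | succ n ih => rw [pow_succ', mul_apply_eq_comp]; exact hT _ ih

variable [IsOrderedAddMonoid E] in
lemma pow_apply_le_pow_apply (hS : ∀ f, 0 ≤ f → 0 ≤ S f) (hT : ∀ f, 0 ≤ f → 0 ≤ T f)
    (hTS : ∀ f, 0 ≤ f → T f ≤ S f) (n : ℕ) {f : E} (hf : 0 ≤ f) : (T ^ n) f ≤ (S ^ n) f := by
  induction n with
  | zero => exact le_rfl
  | succ n ih =>
    rw [pow_succ', pow_succ', mul_apply_eq_comp, mul_apply_eq_comp]
    calc T ((T ^ n) f) ≤ S ((T ^ n) f) := hTS _ (pow_apply_nonneg hT n hf)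
      _ ≤ S ((S ^ n) f) := by
        rw [← sub_nonneg, ← map_sub]; exact hS _ (sub_nonneg.2 ih)

end Order

lemma norm_pow_apply_le {E : Type*} [SeminormedAddCommGroup E] [NormedSpace ℝ E]
    {S : E →L[ℝ] E} (hS : ‖S‖ ≤ 1) (n : ℕ) (f : E) : ‖(S ^ n) f‖ ≤ ‖f‖ := by
  induction n with
  | zero => exact le_rfl
  | succ n ih =>
    rw [pow_succ', mul_apply_eq_comp]
    exact ((S.le_of_opNorm_le hS _).trans_eq (one_mul _)).trans ih

end ContinuousLinearMap

namespace MeasureTheory.L1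

variable {X : Type*} [MeasurableSpace X] {μ : Measure X}

lemma norm_eq_integral_of_nonneg {f : Lp ℝ 1 μ} (hf : 0 ≤ f) : ‖f‖ = L1.integral f := by
  rw [L1.integral_eq_integral, L1.norm_eq_integral_norm]
  refine integral_congr_ae ?_
  filter_upwards [(Lp.coeFn_nonneg f).2 hf] with x hx
  exact Real.norm_of_nonneg hx

lemma norm_add_of_nonneg {f g : Lp ℝ 1 μ} (hf : 0 ≤ f) (hg : 0 ≤ g) :
    ‖f + g‖ = ‖f‖ + ‖g‖ := by
  rw [norm_eq_integral_of_nonneg (add_nonneg hf hg), L1.integral_add,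
    norm_eq_integral_of_nonneg hf, norm_eq_integral_of_nonneg hg]

lemma norm_eq_norm_posPart_add_norm_negPart (f : Lp ℝ 1 μ) : ‖f‖ = ‖f⁺‖ + ‖f⁻‖ := by
  rw [← norm_abs_eq_norm, ← posPart_add_negPart f,
    norm_add_of_nonneg (posPart_nonneg f) (negPart_nonneg f)]

lemma opNorm_le_of_nonneg (A : Lp ℝ 1 μ →L[ℝ] Lp ℝ 1 μ) {C : ℝ} (hC : 0 ≤ C)
    (hA : ∀ f : Lp ℝ 1 μ, 0 ≤ f → ‖A f‖ ≤ C * ‖f‖) : ‖A‖ ≤ C := by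
  refine A.opNorm_le_bound hC fun f => ?_
  calc ‖A f‖ = ‖A f⁺ - A f⁻‖ := by rw [← map_sub, posPart_sub_negPart]
    _ ≤ ‖A f⁺‖ + ‖A f⁻‖ := norm_sub_le _ _
    _ ≤ C * ‖f⁺‖ + C * ‖f⁻‖ := add_le_add (hA _ (posPart_nonneg f)) (hA _ (negPart_nonneg f))
    _ = C * ‖f‖ := by rw [norm_eq_norm_posPart_add_norm_negPart f, mul_add]

lemma norm_pow_sub_pow_apply_le {T S : Lp ℝ 1 μ →L[ℝ] Lp ℝ 1 μ}
    (hTpos : ∀ f : Lp ℝ 1 μ, 0 ≤ f → 0 ≤ T f) (hSpos : ∀ f : Lp ℝ 1 μ, 0 ≤ f → 0 ≤ S f)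
    (hSnorm : ‖S‖ ≤ 1) (hTS : ∀ f : Lp ℝ 1 μ, 0 ≤ f → T f ≤ S f) (hST : ‖S - T‖ ≤ 1)
    (n : ℕ) {f : Lp ℝ 1 μ} (hf : 0 ≤ f) :
    ‖(S ^ n - T ^ n) f‖ ≤ (1 - (1 - ‖S - T‖) ^ n) * ‖f‖ := by
  induction n with
  | zero => simp
  | succ n ih =>
    set δ := ‖S - T‖
    have hTn := ContinuousLinearMap.pow_apply_nonneg hTpos n hf
    have hTSn := sub_nonneg.2 (ContinuousLinearMap.pow_apply_le_pow_apply hSpos hTpos hTS n hf)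
    have hsplit : ‖(T ^ n) f‖ + ‖(S ^ n - T ^ n) f‖ ≤ ‖f‖ := by
      rw [sub_apply, ← norm_add_of_nonneg hTn hTSn, add_sub_cancel]
      exact ContinuousLinearMap.norm_pow_apply_le hSnorm n f
    have hstep :
        (S ^ (n + 1) - T ^ (n + 1)) f = S ((S ^ n - T ^ n) f) + (S - T) ((T ^ n) f) := by
      simp only [pow_succ', sub_apply, mul_apply_eq_comp, map_sub]
      abel
    calc ‖(S ^ (n + 1) - T ^ (n + 1)) f‖
        ≤ ‖(S ^ n - T ^ n) f‖ + δ * ‖(T ^ n) f‖ := by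
          rw [hstep]
          exact (norm_add_le _ _).trans
            (add_le_add ((S.le_of_opNorm_le hSnorm _).trans_eq (one_mul _)) ((S - T).le_opNorm _))
      _ ≤ (1 - δ) * ‖(S ^ n - T ^ n) f‖ + δ * ‖f‖ := by
          linarith [mul_le_mul_of_nonneg_left hsplit (norm_nonneg (S - T))]
      _ ≤ (1 - δ) * ((1 - (1 - δ) ^ n) * ‖f‖) + δ * ‖f‖ := by gcongr
      _ = (1 - (1 - δ) ^ (n + 1)) * ‖f‖ := by ring

end MeasureTheory.L1

theorem stmt4_general {X : Type*} [MeasurableSpace X] (μ : Measure X)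
    (T S : Lp ℝ 1 μ →L[ℝ] Lp ℝ 1 μ)
    (hTpos : ∀ f : Lp ℝ 1 μ, 0 ≤ f → 0 ≤ T f)
    (hSpos : ∀ f : Lp ℝ 1 μ, 0 ≤ f → 0 ≤ S f) (hSnorm : ‖S‖ ≤ 1)
    (hTS : ∀ f : Lp ℝ 1 μ, 0 ≤ f → T f ≤ S f)
    (h : ‖S - T‖ < 1) :
    ∀ n : ℕ, 1 ≤ n → ‖S ^ n - T ^ n‖ < 1 := by
  intro n _
  have hpow : 0 < (1 - ‖S - T‖) ^ n := pow_pos (sub_pos.2 h) n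
  have hbound : ‖S ^ n - T ^ n‖ ≤ 1 - (1 - ‖S - T‖) ^ n :=
    L1.opNorm_le_of_nonneg _ (sub_nonneg.2 (pow_le_one₀ (sub_nonneg.2 h.le) (by simp)))
      fun f hf => L1.norm_pow_sub_pow_apply_le hTpos hSpos hSnorm hTS h.le n hf
  linarith

theorem stmt4 {X : Type*} [MeasurableSpace X] (μ : Measure X)
    (T S : Lp ℝ 1 μ →L[ℝ] Lp ℝ 1 μ)
    (hTpos : ∀ f : Lp ℝ 1 μ, 0 ≤ f → 0 ≤ T f) (hTnorm : ‖T‖ ≤ 1)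
    (hSpos : ∀ f : Lp ℝ 1 μ, 0 ≤ f → 0 ≤ S f) (hSnorm : ‖S‖ ≤ 1)
    (hTS : ∀ f : Lp ℝ 1 μ, 0 ≤ f → T f ≤ S f)
    (h : ‖S - T‖ < 1) :
    ∀ n : ℕ, 1 ≤ n → ‖S ^ n - T ^ n‖ < 1 :=
  stmt4_general μ T S hTpos hSpos hSnorm hTS h
end

section
/- Let T be a contraction on a Banach space X. Then there exists a constant γ > 0 such that for all ℓ ∈ ℕ, ‖((I+T)/2)^ℓ − T·((I+T)/2)^ℓ‖ ≤ γ/√ℓ. -/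
-- central binomial squared bound: C(2m,m)^2 * (2m+1) ≤ 16^m
lemma cb_sq (m : ℕ) : Nat.centralBinom m ^ 2 * (2 * m + 1) ≤ 16 ^ m := by
  induction m with
  | zero => simp [Nat.centralBinom]
  | succ n ih =>
    have h := Nat.succ_mul_centralBinom_succ n
    have hpos : 0 < (n + 1) ^ 2 := by positivity
    refine Nat.le_of_mul_le_mul_left ?_ hpos
    calc (n+1)^2 * (Nat.centralBinom (n+1) ^ 2 * (2*(n+1)+1))
        = ((n+1) * Nat.centralBinom (n+1))^2 * (2*n+3) := by ring
      _ = (2*(2*n+1)*Nat.centralBinom n)^2 * (2*n+3) := by rw [h]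
      _ = (4*(2*n+1)*(2*n+3)) * (Nat.centralBinom n ^ 2 * (2*n+1)) := by ring
      _ ≤ (4*(2*n+2)*(2*n+2)) * 16^n := by
          refine Nat.mul_le_mul ?_ ih
          nlinarith
      _ = (n+1)^2 * 16^(n+1) := by ring

-- antitone part of binomial coefficients
lemma choose_anti {n j : ℕ} (h1 : n / 2 ≤ j) (h2 : j < n) :
    n.choose (j + 1) ≤ n.choose j := by
  have hs1 : j ≤ n := le_of_lt h2
  have hs2 : j + 1 ≤ n := h2
  rw [← Nat.choose_symm hs1, ← Nat.choose_symm hs2]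
  have hnj : n - j = (n - (j + 1)) + 1 := by omega
  rw [hnj]
  rcases lt_or_ge (n - (j + 1)) (n / 2) with h | h
  · exact Nat.choose_le_succ_of_lt_half_left h
  · have h3 : n - (j + 1) = n / 2 ∧ n = 2 * (n / 2) + 1 := by omega
    obtain ⟨h3, h4⟩ := h3
    rw [h3]
    set k := n / 2 with hk
    rw [h4, Nat.choose_symm_half]

-- telescoping of absolute differences for unimodal sequences
lemma tele (g : ℕ → ℝ) (m : ℕ) (h1 : ∀ j < m, g j ≤ g (j + 1)) :
    ∀ n, m ≤ n → (∀ j, m ≤ j → j < n → g (j + 1) ≤ g j) →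
      ∑ j ∈ Finset.range n, |g (j + 1) - g j| = (g m - g 0) + (g m - g n) := by
  refine Nat.le_induction ?_ ?_
  · intro _
    have e : ∑ j ∈ Finset.range m, |g (j + 1) - g j|
        = ∑ j ∈ Finset.range m, (g (j + 1) - g j) :=
      Finset.sum_congr rfl fun j hj => abs_of_nonneg
        (by have := h1 j (Finset.mem_range.mp hj); linarith)
    rw [e, Finset.sum_range_sub]
    ring
  · intro n hmn ih h2
    rw [Finset.sum_range_succ, ih (fun j hj hjn => h2 j hj (Nat.lt_succ_of_lt hjn)),
      abs_of_nonpos (by have := h2 n hmn (Nat.lt_succ_self n); linarith)]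
    ring

-- real bound on middle binomial coefficient
lemma choose_half_le (ℓ : ℕ) (hℓ : 1 ≤ ℓ) :
    (ℓ.choose (ℓ / 2) : ℝ) * Real.sqrt ℓ ≤ 2 ^ ℓ := by
  have key : ∀ m : ℕ, (Nat.centralBinom m : ℝ) * Real.sqrt (2 * m + 1) ≤ 4 ^ m := by
    intro m
    have hc := cb_sq m
    have hc' : (Nat.centralBinom m : ℝ) ^ 2 * (2 * m + 1) ≤ 16 ^ m := by
      exact_mod_cast hc
    have hs : Real.sqrt (2 * m + 1) ^ 2 = 2 * m + 1 := Real.sq_sqrt (by positivity)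
    have h2 : ((Nat.centralBinom m : ℝ) * Real.sqrt (2 * m + 1)) ^ 2 ≤ ((4 : ℝ) ^ m) ^ 2 := by
      have : ((4:ℝ) ^ m) ^ 2 = 16 ^ m := by
        rw [← pow_mul, mul_comm, pow_mul]; norm_num
      rw [this, mul_pow, hs]
      exact hc'
    have hb : (0:ℝ) ≤ (Nat.centralBinom m : ℝ) * Real.sqrt (2 * m + 1) := by positivity
    nlinarith [Real.sqrt_nonneg ((2:ℝ) * m + 1), pow_pos (show (0:ℝ) < 4 by norm_num) m]
  rcases Nat.even_or_odd ℓ with ⟨m, hm⟩ | ⟨m, hm⟩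
  · subst hm
    have hhalf : (m + m) / 2 = m := by omega
    rw [hhalf]
    have hcb : (m + m).choose m = Nat.centralBinom m := by
      rw [Nat.centralBinom]; congr 1; omega
    rw [hcb]
    have h1 : Real.sqrt (m + m : ℕ) ≤ Real.sqrt (2 * m + 1) := by
      apply Real.sqrt_le_sqrt
      push_cast; linarith
    calc (Nat.centralBinom m : ℝ) * Real.sqrt (m + m : ℕ)
        ≤ (Nat.centralBinom m : ℝ) * Real.sqrt (2 * m + 1) := by
          exact mul_le_mul_of_nonneg_left h1 (by positivity)
      _ ≤ 4 ^ m := key m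
      _ = 2 ^ (m + m) := by rw [show (4:ℝ) = 2^2 by norm_num, ← pow_mul]; ring_nf
  · subst hm
    have hhalf : (2 * m + 1) / 2 = m := by omega
    rw [hhalf]
    have hcb : Nat.centralBinom (m + 1) = 2 * (2 * m + 1).choose m := by
      rw [Nat.centralBinom, show 2 * (m + 1) = (2 * m + 1) + 1 by ring,
        Nat.choose_succ_succ, Nat.choose_symm_half]
      omega
    have hcbR : (Nat.centralBinom (m + 1) : ℝ) = 2 * ((2 * m + 1).choose m : ℝ) := by
      exact_mod_cast hcb
    have e : ((2 * m + 1).choose m : ℝ) = (Nat.centralBinom (m + 1) : ℝ) / 2 := by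
      linarith
    have h1 : Real.sqrt ((2 * m + 1 : ℕ) : ℝ) ≤ Real.sqrt (2 * (m + 1 : ℕ) + 1) := by
      apply Real.sqrt_le_sqrt
      push_cast; linarith
    rw [e]
    calc (Nat.centralBinom (m + 1) : ℝ) / 2 * Real.sqrt ((2 * m + 1 : ℕ) : ℝ)
        ≤ (Nat.centralBinom (m + 1) : ℝ) / 2 * Real.sqrt (2 * (m + 1 : ℕ) + 1) :=
          mul_le_mul_of_nonneg_left h1 (by positivity)
      _ = ((Nat.centralBinom (m + 1) : ℝ) * Real.sqrt (2 * (m + 1 : ℕ) + 1)) / 2 := by ring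
      _ ≤ 4 ^ (m + 1) / 2 := by linarith [key (m + 1)]
      _ = 2 ^ (2 * m + 1) := by
          rw [show (4:ℝ) = 2 ^ 2 by norm_num, ← pow_mul,
            show 2 * (m + 1) = (2 * m + 1) + 1 by ring, pow_succ]
          ring

set_option maxHeartbeats 1000000 in
set_option synthInstance.maxHeartbeats 400000 in
theorem stmt5 {E : Type*} [NormedAddCommGroup E] [NormedSpace ℝ E] [CompleteSpace E]
    (T : E →L[ℝ] E) (hT : ‖T‖ ≤ 1) :
    ∃ γ : ℝ, 0 < γ ∧ ∀ ℓ : ℕ, 1 ≤ ℓ →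
      ‖((2 : ℝ)⁻¹ • (1 + T)) ^ ℓ - T * ((2 : ℝ)⁻¹ • (1 + T)) ^ ℓ‖
        ≤ γ / Real.sqrt ℓ := by
  refine ⟨2, by norm_num, fun ℓ hℓ => ?_⟩
  -- powers of T have norm at most 1
  have hTk : ∀ k : ℕ, ‖T ^ k‖ ≤ 1 := by
    intro k
    induction k with
    | zero =>
        rw [pow_zero, ContinuousLinearMap.one_def]
        exact ContinuousLinearMap.norm_id_le
    | succ n ih =>
        calc ‖T ^ (n + 1)‖ = ‖T ^ n * T‖ := by rw [pow_succ]
          _ ≤ ‖T ^ n‖ * ‖T‖ := norm_mul_le _ _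
          _ ≤ 1 := by nlinarith [norm_nonneg (T ^ n), norm_nonneg T]
  set g : ℕ → ℝ := fun j => if j ≤ ℓ then (ℓ.choose j : ℝ) else 0 with hgdef
  -- expansion of (1+T)^ℓ
  have hcomm : Commute T 1 := Commute.one_right T
  have hexp : (1 + T) ^ ℓ = ∑ k ∈ Finset.range (ℓ + 1), g k • T ^ k := by
    rw [add_comm, hcomm.add_pow]
    refine Finset.sum_congr rfl fun k hk => ?_
    have hk' : k ≤ ℓ := Nat.lt_succ_iff.mp (Finset.mem_range.mp hk)
    simp only [hgdef, if_pos hk', one_pow, mul_one]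
    rw [(Nat.cast_commute (ℓ.choose k) (T ^ k)).symm.eq, ← nsmul_eq_mul,
      ← Nat.cast_smul_eq_nsmul ℝ]
  -- key identity
  have key : (1 - T) * (1 + T) ^ ℓ
      = g 0 • (1 : E →L[ℝ] E)
        + ∑ j ∈ Finset.range (ℓ + 1), (g (j + 1) - g j) • T ^ (j + 1) := by
    have e2 : ∑ j ∈ Finset.range (ℓ + 1), (g (j + 1) - g j) • T ^ (j + 1)
        = ∑ j ∈ Finset.range (ℓ + 1), g (j + 1) • T ^ (j + 1)
          - ∑ j ∈ Finset.range (ℓ + 1), g j • T ^ (j + 1) := by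
      rw [← Finset.sum_sub_distrib]
      exact Finset.sum_congr rfl fun j _ => sub_smul _ _ _
    have e3 : g 0 • (1 : E →L[ℝ] E)
          + ∑ j ∈ Finset.range (ℓ + 1), g (j + 1) • T ^ (j + 1)
        = ∑ k ∈ Finset.range (ℓ + 2), g k • T ^ k := by
      rw [Finset.sum_range_succ' (fun k => g k • T ^ k) (ℓ + 1)]
      simp [add_comm]
    have e4 : ∑ k ∈ Finset.range (ℓ + 2), g k • T ^ k
        = ∑ k ∈ Finset.range (ℓ + 1), g k • T ^ k := by
      rw [Finset.sum_range_succ]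
      have : g (ℓ + 1) = 0 := by simp [hgdef]
      rw [this, zero_smul, add_zero]
    have eT : T * ∑ k ∈ Finset.range (ℓ + 1), g k • T ^ k
        = ∑ j ∈ Finset.range (ℓ + 1), g j • T ^ (j + 1) := by
      rw [Finset.mul_sum]
      exact Finset.sum_congr rfl fun k _ => by rw [mul_smul_comm, ← pow_succ']
    rw [sub_mul, one_mul, hexp, eT, e2, ← e4, ← e3]
    abel
  -- norm bound on the bracket
  have hnorm : ‖(1 - T) * (1 + T) ^ ℓ‖ ≤ 2 * (ℓ.choose (ℓ / 2) : ℝ) := by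
    rw [key]
    have hg0 : g 0 = 1 := by simp [hgdef]
    have hgl : g (ℓ + 1) = 0 := by simp [hgdef]
    have hgm : g (ℓ / 2) = (ℓ.choose (ℓ / 2) : ℝ) := by
      simp [hgdef, Nat.div_le_self]
    have hb1 : ‖g 0 • (1 : E →L[ℝ] E)‖ ≤ 1 := by
      rw [hg0, one_smul, ContinuousLinearMap.one_def]
      exact ContinuousLinearMap.norm_id_le
    have hb2 : ‖∑ j ∈ Finset.range (ℓ + 1), (g (j + 1) - g j) • T ^ (j + 1)‖
        ≤ ∑ j ∈ Finset.range (ℓ + 1), |g (j + 1) - g j| := by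
      refine (norm_sum_le _ _).trans (Finset.sum_le_sum fun j _ => ?_)
      rw [norm_smul (g (j + 1) - g j) (T ^ (j + 1)), Real.norm_eq_abs]
      calc |g (j + 1) - g j| * ‖T ^ (j + 1)‖ ≤ |g (j + 1) - g j| * 1 :=
            mul_le_mul_of_nonneg_left (hTk _) (abs_nonneg _)
        _ = |g (j + 1) - g j| := mul_one _
    have hmono : ∀ j < ℓ / 2, g j ≤ g (j + 1) := by
      intro j hj
      simp only [hgdef, if_pos (show j + 1 ≤ ℓ by omega), if_pos (show j ≤ ℓ by omega)]
      exact_mod_cast Nat.choose_le_succ_of_lt_half_left hj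
    have hanti : ∀ j, ℓ / 2 ≤ j → j < ℓ + 1 → g (j + 1) ≤ g j := by
      intro j hj hj'
      rcases lt_or_ge j ℓ with h | h
      · simp only [hgdef, if_pos (show j + 1 ≤ ℓ from h), if_pos (le_of_lt h)]
        exact_mod_cast choose_anti hj h
      · have hj2 : j = ℓ := by omega
        subst hj2
        simp only [hgdef, if_neg (show ¬ j + 1 ≤ j by omega), if_pos (le_refl j)]
        positivity
    have htele := tele g (ℓ / 2) hmono (ℓ + 1) (by omega) hanti
    calc ‖g 0 • (1 : E →L[ℝ] E)
          + ∑ j ∈ Finset.range (ℓ + 1), (g (j + 1) - g j) • T ^ (j + 1)‖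
        ≤ ‖g 0 • (1 : E →L[ℝ] E)‖
          + ‖∑ j ∈ Finset.range (ℓ + 1), (g (j + 1) - g j) • T ^ (j + 1)‖ := norm_add_le _ _
      _ ≤ 1 + ∑ j ∈ Finset.range (ℓ + 1), |g (j + 1) - g j| := add_le_add hb1 hb2
      _ = 1 + ((g (ℓ / 2) - g 0) + (g (ℓ / 2) - g (ℓ + 1))) := by rw [htele]
      _ = 2 * (ℓ.choose (ℓ / 2) : ℝ) := by rw [hg0, hgl, hgm]; ring
  -- final assembly
  have hfact : ((2 : ℝ)⁻¹ • (1 + T)) ^ ℓ - T * ((2 : ℝ)⁻¹ • (1 + T)) ^ ℓ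
      = ((2 : ℝ)⁻¹) ^ ℓ • ((1 - T) * (1 + T) ^ ℓ) := by
    rw [smul_pow, mul_smul_comm, ← smul_sub, sub_mul, one_mul]
  rw [hfact, norm_smul (((2 : ℝ)⁻¹) ^ ℓ) ((1 - T) * (1 + T) ^ ℓ)]
  have h2 : ‖((2 : ℝ)⁻¹) ^ ℓ‖ = ((2 : ℝ) ^ ℓ)⁻¹ := by
    rw [Real.norm_eq_abs, abs_pow, abs_of_nonneg (by norm_num : (0:ℝ) ≤ 2⁻¹), inv_pow]
  rw [h2]
  have hsq : 0 < Real.sqrt ℓ := Real.sqrt_pos.mpr (by exact_mod_cast Nat.pos_of_ne_zero (by omega))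
  have hC := choose_half_le ℓ hℓ
  calc ((2 : ℝ) ^ ℓ)⁻¹ * ‖(1 - T) * (1 + T) ^ ℓ‖
      ≤ ((2 : ℝ) ^ ℓ)⁻¹ * (2 * (ℓ.choose (ℓ / 2) : ℝ)) :=
        mul_le_mul_of_nonneg_left hnorm (by positivity)
    _ ≤ 2 / Real.sqrt ℓ := by
        rw [le_div_iff₀ hsq]
        calc ((2 : ℝ) ^ ℓ)⁻¹ * (2 * (ℓ.choose (ℓ / 2) : ℝ)) * Real.sqrt ℓ
            = (2 * ((ℓ.choose (ℓ / 2) : ℝ) * Real.sqrt ℓ)) * ((2 : ℝ) ^ ℓ)⁻¹ := by ring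
          _ ≤ (2 * (2 : ℝ) ^ ℓ) * ((2 : ℝ) ^ ℓ)⁻¹ := by
              refine mul_le_mul_of_nonneg_right ?_ (by positivity)
              linarith
          _ = 2 := by field_simp
end
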